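/- arXiv:2405.18354 — 4 statements merged into one kernel-verified Lean document; each statement's English description precedes it below -/
import Mathlib

section
/- If a group G embeds into a group admitting an action of type (A) on some set, and a group H embeds into a group admitting an action of type (A) on some set, then the direct product G × H embeds into a group admitting an action of type (A) on some set. -/
open Pointwise

universe u v w u₁ v₁ w₁ u₂ v₂ w₂ v₃ w₃

/-- A group is finitely presented: it is isomorphic to a presented group on finitely many
generators with finitely many relators. -/
def FinPresGroup (G : Type u) [Group G] : Prop :=
  ∃ (n : ℕ) (rels : Set (FreeGroup (Fin n))), rels.Finite ∧
    Nonempty (PresentedGroup rels ≃* G)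

/-- The action of `G` on `S` is of type (A): it is faithful, `G` is finitely presented,
every point stabilizer is finitely generated, and there are finitely many `G`-orbits of
two-element subsets of `S`. -/
def IsTypeA (G : Type u) [Group G] (S : Type v) [MulAction G S] : Prop :=
  (∀ g : G, (∀ s : S, g • s = s) → g = 1) ∧
  FinPresGroup G ∧
  (∀ s : S, (MulAction.stabilizer G s).FG) ∧
  ∃ F : Set (Set S), F.Finite ∧ (∀ U ∈ F, U.ncard = 2) ∧
    ∀ T : Set S, T.ncard = 2 → ∃ U ∈ F, ∃ g : G, g • U = T

/-- The group `G` embeds into a group admitting an action of type (A) on some set. -/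
def EmbedsInTypeA.{a, b, c} (G : Type a) [Group G] : Prop :=
  ∃ (E : Type b) (_ : Group E) (S : Type c) (_ : MulAction E S),
    IsTypeA E S ∧ ∃ φ : G →* E, Function.Injective φ

section Aux
variable {A : Type*} {B : Type*} [Group A] [Group B]

lemma FinPresGroup.of_mulEquiv (e : A ≃* B) (h : FinPresGroup A) : FinPresGroup B := by
  obtain ⟨n, rels, hfin, ⟨iso⟩⟩ := h
  exact ⟨n, rels, hfin, ⟨iso.trans e⟩⟩

lemma FinPresGroup.fg (h : FinPresGroup A) : Group.FG A := by
  obtain ⟨n, rels, hfin, ⟨iso⟩⟩ := h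
  haveI : Group.FG (FreeGroup (Fin n)) :=
    Group.fg_iff.2 ⟨Set.range FreeGroup.of, FreeGroup.closure_range_of _,
      Set.finite_range _⟩
  haveI : Group.FG (PresentedGroup rels) :=
    Group.fg_of_surjective (PresentedGroup.mk_surjective rels)
  exact Group.fg_of_surjective (f := iso.toMonoidHom) iso.surjective

lemma FinPresGroup.countable (h : FinPresGroup A) : Countable A := by
  obtain ⟨n, rels, hfin, ⟨iso⟩⟩ := h
  have h1 : Function.Surjective (FreeGroup.mk : List (Fin n × Bool) → FreeGroup (Fin n)) :=
    fun x => Quot.inductionOn x fun L => ⟨L, rfl⟩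
  haveI : Countable (FreeGroup (Fin n)) := h1.countable
  haveI : Countable (PresentedGroup rels) := (PresentedGroup.mk_surjective rels).countable
  exact iso.surjective.countable

lemma Group.FG.my_prod (hA : Group.FG A) (hB : Group.FG B) : Group.FG (A × B) := by
  obtain ⟨SA, hSA, hSAfin⟩ := Group.fg_iff.1 hA
  obtain ⟨SB, hSB, hSBfin⟩ := Group.fg_iff.1 hB
  refine Group.fg_iff.2 ⟨(fun a => ((a, 1) : A × B)) '' SA ∪ (fun b => ((1, b) : A × B)) '' SB,
    ?_, (hSAfin.image _).union (hSBfin.image _)⟩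
  rw [eq_top_iff]
  rintro ⟨a, b⟩ -
  have h1 : ((a, 1) : A × B) ∈ Subgroup.closure ((fun a => ((a, 1) : A × B)) '' SA
      ∪ (fun b => ((1, b) : A × B)) '' SB) := by
    apply Subgroup.closure_mono Set.subset_union_left
    have : ((a, 1) : A × B) = MonoidHom.inl A B a := rfl
    rw [this]
    have : (MonoidHom.inl A B) '' SA = (fun a => ((a, 1) : A × B)) '' SA := rfl
    rw [← this, ← MonoidHom.map_closure, hSA]
    exact Subgroup.mem_map_of_mem _ (Subgroup.mem_top a)
  have h2 : ((1, b) : A × B) ∈ Subgroup.closure ((fun a => ((a, 1) : A × B)) '' SA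
      ∪ (fun b => ((1, b) : A × B)) '' SB) := by
    apply Subgroup.closure_mono Set.subset_union_right
    have : ((1, b) : A × B) = MonoidHom.inr A B b := rfl
    rw [this]
    have : (MonoidHom.inr A B) '' SB = (fun b => ((1, b) : A × B)) '' SB := rfl
    rw [← this, ← MonoidHom.map_closure, hSB]
    exact Subgroup.mem_map_of_mem _ (Subgroup.mem_top b)
  have : ((a, b) : A × B) = (a, 1) * (1, b) := by simp
  rw [this]
  exact mul_mem h1 h2

end Aux

section FPProd
open scoped commutatorElement
variable {A : Type*} {B : Type*} [Group A] [Group B]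

lemma presentedGroup_mk_eq_one {α : Type*} {rels : Set (FreeGroup α)} {x : FreeGroup α}
    (hx : x ∈ rels) : PresentedGroup.mk rels x = 1 :=
  (QuotientGroup.eq_one_iff x).2 (Subgroup.subset_normalClosure hx)

lemma finPresGroup_prod {n m : ℕ} (rels₁ : Set (FreeGroup (Fin n)))
    (rels₂ : Set (FreeGroup (Fin m))) :
    Nonempty (PresentedGroup
        ((FreeGroup.map Sum.inl '' rels₁ ∪ FreeGroup.map Sum.inr '' rels₂) ∪
          Set.range (fun p : Fin n × Fin m =>
            ⁅(FreeGroup.of (Sum.inl p.1) : FreeGroup (Fin n ⊕ Fin m)),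
              FreeGroup.of (Sum.inr p.2)⁆))
      ≃* PresentedGroup rels₁ × PresentedGroup rels₂) := by
  set rels : Set (FreeGroup (Fin n ⊕ Fin m)) :=
    (FreeGroup.map Sum.inl '' rels₁ ∪ FreeGroup.map Sum.inr '' rels₂) ∪
      Set.range (fun p : Fin n × Fin m =>
        ⁅(FreeGroup.of (Sum.inl p.1) : FreeGroup (Fin n ⊕ Fin m)),
          FreeGroup.of (Sum.inr p.2)⁆) with hrels
  set f : Fin n ⊕ Fin m → PresentedGroup rels₁ × PresentedGroup rels₂ :=
    Sum.elim (fun i => ((PresentedGroup.of i : PresentedGroup rels₁), (1 : PresentedGroup rels₂)))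
      (fun j => ((1 : PresentedGroup rels₁), (PresentedGroup.of j : PresentedGroup rels₂))) with hf
  have hφrel : ∀ r ∈ rels, FreeGroup.lift f r = 1 := by
    have key₁ : (FreeGroup.lift f).comp (FreeGroup.map Sum.inl) =
        (MonoidHom.inl (PresentedGroup rels₁) (PresentedGroup rels₂)).comp (PresentedGroup.mk rels₁) := by
      apply FreeGroup.ext_hom; intro i
      simp [hf, PresentedGroup.of, FreeGroup.lift_apply_of]
    have key₂ : (FreeGroup.lift f).comp (FreeGroup.map Sum.inr) =
        (MonoidHom.inr (PresentedGroup rels₁) (PresentedGroup rels₂)).comp (PresentedGroup.mk rels₂) := by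
      apply FreeGroup.ext_hom; intro j
      simp [hf, PresentedGroup.of, FreeGroup.lift_apply_of]
    rintro r ((⟨r₁, hr₁, rfl⟩ | ⟨r₂, hr₂, rfl⟩) | ⟨⟨i, j⟩, rfl⟩)
    · have := DFunLike.congr_fun key₁ r₁
      simp only [MonoidHom.comp_apply] at this
      rw [this, presentedGroup_mk_eq_one hr₁, map_one]
    · have := DFunLike.congr_fun key₂ r₂
      simp only [MonoidHom.comp_apply] at this
      rw [this, presentedGroup_mk_eq_one hr₂, map_one]
    · rw [map_commutatorElement, FreeGroup.lift_apply_of, FreeGroup.lift_apply_of]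
      rw [commutatorElement_eq_one_iff_mul_comm]
      simp [hf, Prod.ext_iff]
  set φ : PresentedGroup rels →* PresentedGroup rels₁ × PresentedGroup rels₂ := PresentedGroup.toGroup hφrel with hφ
  -- ψ₁
  have hψ₁rel : ∀ r ∈ rels₁,
      FreeGroup.lift (fun i => (PresentedGroup.of (Sum.inl i) : PresentedGroup rels)) r = 1 := by
    have key : FreeGroup.lift (fun i => (PresentedGroup.of (Sum.inl i) : PresentedGroup rels)) =
        (PresentedGroup.mk rels).comp (FreeGroup.map Sum.inl) := by
      apply FreeGroup.ext_hom; intro i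
      simp [PresentedGroup.of, FreeGroup.lift_apply_of]
    intro r hr
    rw [key]
    exact presentedGroup_mk_eq_one (Or.inl (Or.inl ⟨r, hr, rfl⟩))
  have hψ₂rel : ∀ r ∈ rels₂,
      FreeGroup.lift (fun j => (PresentedGroup.of (Sum.inr j) : PresentedGroup rels)) r = 1 := by
    have key : FreeGroup.lift (fun j => (PresentedGroup.of (Sum.inr j) : PresentedGroup rels)) =
        (PresentedGroup.mk rels).comp (FreeGroup.map Sum.inr) := by
      apply FreeGroup.ext_hom; intro j
      simp [PresentedGroup.of, FreeGroup.lift_apply_of]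
    intro r hr
    rw [key]
    exact presentedGroup_mk_eq_one (Or.inl (Or.inr ⟨r, hr, rfl⟩))
  set ψ₁ : PresentedGroup rels₁ →* PresentedGroup rels := PresentedGroup.toGroup hψ₁rel with hψ₁
  set ψ₂ : PresentedGroup rels₂ →* PresentedGroup rels := PresentedGroup.toGroup hψ₂rel with hψ₂
  have base : ∀ (i : Fin n) (j : Fin m),
      Commute (PresentedGroup.of (Sum.inl i) : PresentedGroup rels)
        (PresentedGroup.of (Sum.inr j)) := by
    intro i j
    rw [← commutatorElement_eq_one_iff_commute]
    have : (⁅(PresentedGroup.of (Sum.inl i) : PresentedGroup rels),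
        PresentedGroup.of (Sum.inr j)⁆) =
        PresentedGroup.mk rels
          ⁅(FreeGroup.of (Sum.inl i) : FreeGroup (Fin n ⊕ Fin m)), FreeGroup.of (Sum.inr j)⁆ := by
      rw [map_commutatorElement]; rfl
    rw [this]
    exact presentedGroup_mk_eq_one (Or.inr ⟨(i, j), rfl⟩)
  have step1 : ∀ (i : Fin n) (b : PresentedGroup rels₂),
      Commute (PresentedGroup.of (Sum.inl i) : PresentedGroup rels) (ψ₂ b) := by
    intro i b
    induction b using PresentedGroup.induction_on with
    | H z =>
      induction z using FreeGroup.induction_on with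
      | C1 => simp [Commute.one_right]
      | of j =>
        show Commute _ (ψ₂ (PresentedGroup.of j))
        rw [hψ₂, PresentedGroup.toGroup.of]
        exact base i j
      | inv_of j ih =>
        rw [map_inv, map_inv]
        exact ih.inv_right
      | mul x y hx hy =>
        rw [map_mul, map_mul]
        exact hx.mul_right hy
  have comm : ∀ (a : PresentedGroup rels₁) (b : PresentedGroup rels₂), Commute (ψ₁ a) (ψ₂ b) := by
    intro a b
    induction a using PresentedGroup.induction_on with
    | H z =>
      induction z using FreeGroup.induction_on with
      | C1 => simp [Commute.one_left]
      | of i =>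
        show Commute (ψ₁ (PresentedGroup.of i)) _
        rw [hψ₁, PresentedGroup.toGroup.of]
        exact step1 i b
      | inv_of i ih =>
        rw [map_inv, map_inv]
        exact ih.inv_left
      | mul x y hx hy =>
        rw [map_mul, map_mul]
        exact hx.mul_left hy
  set ψ : PresentedGroup rels₁ × PresentedGroup rels₂ →* PresentedGroup rels := MonoidHom.noncommCoprod ψ₁ ψ₂ comm with hψ
  have left : ψ.comp φ = MonoidHom.id (PresentedGroup rels) := by
    apply PresentedGroup.ext
    rintro (i | j)
    · show ψ (φ (PresentedGroup.of (Sum.inl i))) = PresentedGroup.of (Sum.inl i)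
      rw [hφ, PresentedGroup.toGroup.of]
      show ψ₁ (PresentedGroup.of i) * ψ₂ 1 = PresentedGroup.of (Sum.inl i)
      rw [map_one, mul_one, hψ₁, PresentedGroup.toGroup.of]
    · show ψ (φ (PresentedGroup.of (Sum.inr j))) = PresentedGroup.of (Sum.inr j)
      rw [hφ, PresentedGroup.toGroup.of]
      show ψ₁ 1 * ψ₂ (PresentedGroup.of j) = PresentedGroup.of (Sum.inr j)
      rw [map_one, one_mul, hψ₂, PresentedGroup.toGroup.of]
  have right₁ : ∀ a : PresentedGroup rels₁, φ (ψ₁ a) = (a, 1) := by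
    have : φ.comp ψ₁ = MonoidHom.inl (PresentedGroup rels₁) (PresentedGroup rels₂) := by
      apply PresentedGroup.ext
      intro i
      rw [MonoidHom.comp_apply, hψ₁, PresentedGroup.toGroup.of, hφ, PresentedGroup.toGroup.of]
      rfl
    intro a; exact DFunLike.congr_fun this a
  have right₂ : ∀ b : PresentedGroup rels₂, φ (ψ₂ b) = (1, b) := by
    have : φ.comp ψ₂ = MonoidHom.inr (PresentedGroup rels₁) (PresentedGroup rels₂) := by
      apply PresentedGroup.ext
      intro j
      rw [MonoidHom.comp_apply, hψ₂, PresentedGroup.toGroup.of, hφ, PresentedGroup.toGroup.of]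
      rfl
    intro b; exact DFunLike.congr_fun this b
  have hinj : Function.Injective φ := by
    have : Function.LeftInverse ψ φ := fun x => DFunLike.congr_fun left x
    exact this.injective
  have hsurj : Function.Surjective φ := by
    rintro ⟨a, b⟩
    refine ⟨ψ₁ a * ψ₂ b, ?_⟩
    rw [map_mul, right₁, right₂]
    simp
  exact ⟨MulEquiv.ofBijective φ ⟨hinj, hsurj⟩⟩

end FPProd

section SumAction
variable {E₁ : Type*} {E₂ : Type*} {S₁ : Type*} {S₂ : Type*}
  [Group E₁] [Group E₂] [MulAction E₁ S₁] [MulAction E₂ S₂]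

instance sumSMul : SMul (E₁ × E₂) (S₁ ⊕ S₂) :=
  ⟨fun g s => Sum.map (g.1 • ·) (g.2 • ·) s⟩

lemma sum_smul_inl (g : E₁ × E₂) (s : S₁) :
    g • (Sum.inl s : S₁ ⊕ S₂) = Sum.inl (g.1 • s) := rfl

lemma sum_smul_inr (g : E₁ × E₂) (s : S₂) :
    g • (Sum.inr s : S₁ ⊕ S₂) = Sum.inr (g.2 • s) := rfl

instance sumMulAction : MulAction (E₁ × E₂) (S₁ ⊕ S₂) where
  one_smul s := by cases s <;> simp [sum_smul_inl, sum_smul_inr]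
  mul_smul g h s := by cases s <;> simp [sum_smul_inl, sum_smul_inr, mul_smul]

lemma smul_image_inl (g : E₁ × E₂) (U : Set S₁) :
    g • (Sum.inl '' U : Set (S₁ ⊕ S₂)) = Sum.inl '' (g.1 • U) := by
  ext x
  simp only [Set.mem_smul_set, Set.mem_image]
  constructor
  · rintro ⟨y, ⟨u, hu, rfl⟩, rfl⟩
    exact ⟨g.1 • u, ⟨u, hu, rfl⟩, (sum_smul_inl g u).symm⟩
  · rintro ⟨v, ⟨u, hu, rfl⟩, rfl⟩
    exact ⟨Sum.inl u, ⟨u, hu, rfl⟩, sum_smul_inl g u⟩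

lemma smul_image_inr (g : E₁ × E₂) (U : Set S₂) :
    g • (Sum.inr '' U : Set (S₁ ⊕ S₂)) = Sum.inr '' (g.2 • U) := by
  ext x
  simp only [Set.mem_smul_set, Set.mem_image]
  constructor
  · rintro ⟨y, ⟨u, hu, rfl⟩, rfl⟩
    exact ⟨g.2 • u, ⟨u, hu, rfl⟩, (sum_smul_inr g u).symm⟩
  · rintro ⟨v, ⟨u, hu, rfl⟩, rfl⟩
    exact ⟨Sum.inr u, ⟨u, hu, rfl⟩, sum_smul_inr g u⟩

lemma stabilizer_inl (s : S₁) :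
    MulAction.stabilizer (E₁ × E₂) (Sum.inl s : S₁ ⊕ S₂) =
      (MulAction.stabilizer E₁ s).prod ⊤ := by
  ext g
  simp [MulAction.mem_stabilizer_iff, Subgroup.mem_prod, sum_smul_inl]

lemma stabilizer_inr (s : S₂) :
    MulAction.stabilizer (E₁ × E₂) (Sum.inr s : S₁ ⊕ S₂) =
      (⊤ : Subgroup E₁).prod (MulAction.stabilizer E₂ s) := by
  ext g
  simp [MulAction.mem_stabilizer_iff, Subgroup.mem_prod, sum_smul_inr]

end SumAction

section Reps
variable {E : Type*} {S : Type*} [Group E] [MulAction E S]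

lemma exists_orbit_reps
    (hF : ∃ F : Set (Set S), F.Finite ∧ (∀ U ∈ F, U.ncard = 2) ∧
      ∀ T : Set S, T.ncard = 2 → ∃ U ∈ F, ∃ g : E, g • U = T) :
    ∃ R : Set S, R.Finite ∧ ∀ s : S, ∃ r ∈ R, ∃ g : E, g • r = s := by
  obtain ⟨F, hFfin, hF2, hFcov⟩ := hF
  refine ⟨⋃₀ F ∪ {s | ∀ t, t = s}, ?_, ?_⟩
  · refine Set.Finite.union (Set.Finite.sUnion hFfin fun U hU => ?_) ?_
    · exact Set.finite_of_ncard_ne_zero (by rw [hF2 U hU]; norm_num)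
    · exact Set.Subsingleton.finite fun a ha b hb => (ha b).symm.trans (hb b) ▸ rfl
  · intro s
    by_cases h : ∀ t : S, t = s
    · exact ⟨s, Or.inr h, 1, one_smul _ _⟩
    · push_neg at h
      obtain ⟨t, ht⟩ := h
      obtain ⟨U, hU, g, hg⟩ := hFcov {t, s} (Set.ncard_pair ht)
      have hs : s ∈ g • U := by rw [hg]; exact Set.mem_insert_iff.2 (Or.inr rfl)
      obtain ⟨u, hu, hgu⟩ := hs
      exact ⟨u, Or.inl ⟨U, hU, hu⟩, g, hgu⟩

lemma countable_of_reps [Countable E] {R : Set S} (hR : R.Finite)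
    (hcov : ∀ s : S, ∃ r ∈ R, ∃ g : E, g • r = s) : Countable S := by
  haveI : Countable R := hR.countable
  have hsurj : Function.Surjective (fun p : E × R => p.1 • (p.2 : S)) := by
    intro s
    obtain ⟨r, hr, g, hg⟩ := hcov s
    exact ⟨(g, ⟨r, hr⟩), hg⟩
  exact hsurj.countable

end Reps

section FGProd
variable {A : Type*} {B : Type*} [Group A] [Group B]

lemma subgroup_fg_prod_top {K : Subgroup A} (hK : K.FG) (hB : Group.FG B) :
    (K.prod (⊤ : Subgroup B)).FG := by
  have hK' : Group.FG K := (Group.fg_iff_subgroup_fg K).2 hK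
  have htop : Group.FG (⊤ : Subgroup B) := (Group.fg_iff_subgroup_fg ⊤).2 hB.out
  haveI hprod : Group.FG (K × (⊤ : Subgroup B)) := hK'.my_prod htop
  have hsurj : Function.Surjective ((Subgroup.prodEquiv K (⊤ : Subgroup B)).symm.toMonoidHom) := by
    intro x
    obtain ⟨a, ha⟩ := (Subgroup.prodEquiv K (⊤ : Subgroup B)).symm.surjective x
    exact ⟨a, ha⟩
  have : Group.FG (K.prod (⊤ : Subgroup B)) := Group.fg_of_surjective hsurj
  exact (Group.fg_iff_subgroup_fg _).1 this

lemma subgroup_fg_top_prod {K : Subgroup B} (hA : Group.FG A) (hK : K.FG) :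
    ((⊤ : Subgroup A).prod K).FG := by
  have hK' : Group.FG K := (Group.fg_iff_subgroup_fg K).2 hK
  have htop : Group.FG (⊤ : Subgroup A) := (Group.fg_iff_subgroup_fg ⊤).2 hA.out
  haveI hprod : Group.FG ((⊤ : Subgroup A) × K) := htop.my_prod hK'
  have hsurj : Function.Surjective (((⊤ : Subgroup A).prodEquiv K).symm.toMonoidHom) := by
    intro x
    obtain ⟨a, ha⟩ := ((⊤ : Subgroup A).prodEquiv K).symm.surjective x
    exact ⟨a, ha⟩
  have : Group.FG ((⊤ : Subgroup A).prod K) := Group.fg_of_surjective hsurj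
  exact (Group.fg_iff_subgroup_fg _).1 this

end FGProd

section TypeASum
open scoped commutatorElement
variable {E₁ : Type*} {E₂ : Type*} {S₁ : Type*} {S₂ : Type*}
  [Group E₁] [Group E₂] [MulAction E₁ S₁] [MulAction E₂ S₂]

lemma isTypeA_sum (h₁ : IsTypeA E₁ S₁) (h₂ : IsTypeA E₂ S₂) :
    IsTypeA (E₁ × E₂) (S₁ ⊕ S₂) := by
  obtain ⟨hf₁, hp₁, hs₁, hF₁⟩ := h₁
  obtain ⟨hf₂, hp₂, hs₂, hF₂⟩ := h₂
  refine ⟨?_, ?_, ?_, ?_⟩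
  · intro g hg
    have e1 : g.1 = 1 := hf₁ g.1 fun s => by
      have := hg (Sum.inl s); rw [sum_smul_inl] at this; exact Sum.inl_injective this
    have e2 : g.2 = 1 := hf₂ g.2 fun s => by
      have := hg (Sum.inr s); rw [sum_smul_inr] at this; exact Sum.inr_injective this
    exact Prod.ext e1 e2
  · obtain ⟨n, rels₁, hfin₁, ⟨e₁⟩⟩ := hp₁
    obtain ⟨m, rels₂, hfin₂, ⟨e₂⟩⟩ := hp₂
    obtain ⟨iso⟩ := finPresGroup_prod rels₁ rels₂
    have hrelsfin : ((FreeGroup.map Sum.inl '' rels₁ ∪ FreeGroup.map Sum.inr '' rels₂) ∪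
        Set.range (fun p : Fin n × Fin m =>
          ⁅(FreeGroup.of (Sum.inl p.1) : FreeGroup (Fin n ⊕ Fin m)),
            FreeGroup.of (Sum.inr p.2)⁆)).Finite :=
      ((hfin₁.image _).union (hfin₂.image _)).union (Set.finite_range _)
    refine ⟨n + m, FreeGroup.freeGroupCongr finSumFinEquiv '' _, hrelsfin.image _, ⟨?_⟩⟩
    exact ((PresentedGroup.equivPresentedGroup _ finSumFinEquiv).symm.trans iso).trans
      (MulEquiv.prodCongr e₁ e₂)
  · intro s
    cases s with
    | inl s => rw [stabilizer_inl]; exact subgroup_fg_prod_top (hs₁ s) hp₂.fg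
    | inr s => rw [stabilizer_inr]; exact subgroup_fg_top_prod hp₁.fg (hs₂ s)
  · obtain ⟨R₁, hR₁fin, hR₁⟩ := exists_orbit_reps hF₁
    obtain ⟨R₂, hR₂fin, hR₂⟩ := exists_orbit_reps hF₂
    obtain ⟨F₁, hF₁fin, hF₁2, hF₁cov⟩ := hF₁
    obtain ⟨F₂, hF₂fin, hF₂2, hF₂cov⟩ := hF₂
    refine ⟨((Sum.inl '' ·) '' F₁) ∪ ((Sum.inr '' ·) '' F₂) ∪
      ((fun p : S₁ × S₂ => ({Sum.inl p.1, Sum.inr p.2} : Set (S₁ ⊕ S₂))) '' (R₁ ×ˢ R₂)),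
      ?_, ?_, ?_⟩
    · exact ((hF₁fin.image _).union (hF₂fin.image _)).union ((hR₁fin.prod hR₂fin).image _)
    · rintro U ((⟨V, hV, rfl⟩ | ⟨V, hV, rfl⟩) | ⟨⟨r₁, r₂⟩, _, rfl⟩)
      · rw [Set.ncard_image_of_injective _ Sum.inl_injective]; exact hF₁2 V hV
      · rw [Set.ncard_image_of_injective _ Sum.inr_injective]; exact hF₂2 V hV
      · exact Set.ncard_pair (by simp)
    · intro T hT
      obtain ⟨a, b, hab, rfl⟩ := Set.ncard_eq_two.1 hT
      cases a with
      | inl a =>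
        cases b with
        | inl b =>
          have hab' : a ≠ b := fun h => hab (by rw [h])
          obtain ⟨U, hU, g, hg⟩ := hF₁cov {a, b} (Set.ncard_pair hab')
          refine ⟨Sum.inl '' U, Or.inl (Or.inl ⟨U, hU, rfl⟩), (g, 1), ?_⟩
          rw [smul_image_inl]
          rw [show ((g, (1 : E₂)).1 : E₁) • U = g • U from rfl, hg]
          simp [Set.image_insert_eq]
        | inr b =>
          obtain ⟨r₁, hr₁, g₁, hg₁⟩ := hR₁ a
          obtain ⟨r₂, hr₂, g₂, hg₂⟩ := hR₂ b
          refine ⟨{Sum.inl r₁, Sum.inr r₂},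
            Or.inr ⟨(r₁, r₂), Set.mk_mem_prod hr₁ hr₂, rfl⟩, (g₁, g₂), ?_⟩
          rw [Set.smul_set_insert, Set.smul_set_singleton, sum_smul_inl, sum_smul_inr]
          rw [show ((g₁, g₂).1 : E₁) = g₁ from rfl, show ((g₁, g₂).2 : E₂) = g₂ from rfl,
            hg₁, hg₂]
      | inr a =>
        cases b with
        | inl b =>
          rw [Set.pair_comm]
          obtain ⟨r₁, hr₁, g₁, hg₁⟩ := hR₁ b
          obtain ⟨r₂, hr₂, g₂, hg₂⟩ := hR₂ a
          refine ⟨{Sum.inl r₁, Sum.inr r₂},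
            Or.inr ⟨(r₁, r₂), Set.mk_mem_prod hr₁ hr₂, rfl⟩, (g₁, g₂), ?_⟩
          rw [Set.smul_set_insert, Set.smul_set_singleton, sum_smul_inl, sum_smul_inr]
          rw [show ((g₁, g₂).1 : E₁) = g₁ from rfl, show ((g₁, g₂).2 : E₂) = g₂ from rfl,
            hg₁, hg₂]
        | inr b =>
          have hab' : a ≠ b := fun h => hab (by rw [h])
          obtain ⟨U, hU, g, hg⟩ := hF₂cov {a, b} (Set.ncard_pair hab')
          refine ⟨Sum.inr '' U, Or.inl (Or.inr ⟨U, hU, rfl⟩), (1, g), ?_⟩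
          rw [smul_image_inr]
          rw [show (((1 : E₁), g).2 : E₂) • U = g • U from rfl, hg]
          simp [Set.image_insert_eq]

end TypeASum

section Transport
variable {E : Type*} {S : Type*} {E' : Type*} {S' : Type*} [Group E] [Group E']
  [MulAction E S]

/-- Transport a `MulAction` along a group isomorphism and an equivalence of sets. -/
def transportAction (e : E' ≃* E) (f : S' ≃ S) : MulAction E' S' where
  smul g s := f.symm (e g • f s)
  one_smul s := by
    show f.symm (e 1 • f s) = s
    simp
  mul_smul g h s := by
    show f.symm (e (g * h) • f s) = f.symm (e g • f (f.symm (e h • f s)))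
    simp [mul_smul]

lemma isTypeA_transport (e : E' ≃* E) (f : S' ≃ S) (h : IsTypeA E S) :
    letI := transportAction e f
    IsTypeA E' S' := by
  letI := transportAction e f
  have smul_def : ∀ (g : E') (s : S'), g • s = f.symm (e g • f s) := fun _ _ => rfl
  obtain ⟨hfa, hfp, hst, hF⟩ := h
  refine ⟨?_, ?_, ?_, ?_⟩
  · intro g hg
    have : e g = 1 := by
      apply hfa
      intro t
      have := hg (f.symm t)
      rw [smul_def, f.apply_symm_apply] at this
      exact f.symm.injective this
    have h1 : e g = e 1 := by rw [this, map_one]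
    exact e.injective h1
  · exact FinPresGroup.of_mulEquiv e.symm hfp
  · intro s'
    have key : ∀ g : E', g ∈ MulAction.stabilizer E' s' ↔ e g ∈ MulAction.stabilizer E (f s') := by
      intro g
      rw [MulAction.mem_stabilizer_iff, MulAction.mem_stabilizer_iff, smul_def,
        Equiv.symm_apply_eq]
    have hfg : Group.FG (MulAction.stabilizer E (f s')) :=
      (Group.fg_iff_subgroup_fg _).2 (hst (f s'))
    haveI := hfg
    have hsurj : Function.Surjective
        (fun x : MulAction.stabilizer E (f s') =>
          (⟨e.symm x, by
            rw [key, e.apply_symm_apply]; exact x.2⟩ : MulAction.stabilizer E' s')) := by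
      rintro ⟨g, hg⟩
      exact ⟨⟨e g, (key g).1 hg⟩, by simp⟩
    have hm : ∀ x y, (fun x : MulAction.stabilizer E (f s') =>
          (⟨e.symm x, by rw [key, e.apply_symm_apply]; exact x.2⟩ :
            MulAction.stabilizer E' s')) (x * y) =
        (fun x => ⟨e.symm x, by rw [key, e.apply_symm_apply]; exact x.2⟩) x *
        (fun x => ⟨e.symm x, by rw [key, e.apply_symm_apply]; exact x.2⟩) y := by
      intro x y
      ext
      simp
    have : Group.FG (MulAction.stabilizer E' s') :=
      Group.fg_of_surjective (f := { toFun := _, map_one' := by ext; simp, map_mul' := hm }) hsurj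
    exact (Group.fg_iff_subgroup_fg _).1 this
  · obtain ⟨F, hFfin, hF2, hFcov⟩ := hF
    refine ⟨(fun U => f.symm '' U) '' F, hFfin.image _, ?_, ?_⟩
    · rintro U ⟨V, hV, rfl⟩
      rw [Set.ncard_image_of_injective _ f.symm.injective]
      exact hF2 V hV
    · intro T' hT'
      have : (f '' T').ncard = 2 := by
        rw [Set.ncard_image_of_injective _ f.injective]; exact hT'
      obtain ⟨U, hU, g, hg⟩ := hFcov (f '' T') this
      refine ⟨f.symm '' U, ⟨U, hU, rfl⟩, e.symm g, ?_⟩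
      have hmemiff : ∀ t : S', t ∈ (e.symm g) • (f.symm '' U) ↔ f t ∈ g • U := by
        intro t
        constructor
        · rintro ⟨u', ⟨u, hu, rfl⟩, rfl⟩
          simp only [smul_def, e.apply_symm_apply, f.apply_symm_apply]
          exact Set.smul_mem_smul_set hu
        · rintro ⟨u, hu, hgu⟩
          refine ⟨f.symm u, ⟨u, hu, rfl⟩, ?_⟩
          have hgu' : g • u = f t := hgu
          simp only [smul_def, e.apply_symm_apply, f.apply_symm_apply]
          rw [hgu', f.symm_apply_apply]
      ext t
      rw [hmemiff, hg]
      exact ⟨fun ht => f.injective.mem_set_image.1 ht, fun ht => Set.mem_image_of_mem f ht⟩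

end Transport

section Smallify

/-- Any countable group is isomorphic to a group in any universe. -/
lemma exists_small_group (X : Type u) [Group X] [Countable X] :
    ∃ (Y : Type w) (_ : Group Y), Nonempty (Y ≃* X) := by
  haveI : Small.{w} X := Countable.toSmall X
  exact ⟨Shrink.{w} X, inferInstance, ⟨Shrink.mulEquiv⟩⟩

end Smallify

/-- If `G` embeds into a group admitting an action of type (A) and `H` embeds into a group
admitting an action of type (A), then so does the direct product `G × H`. -/
theorem embedsInTypeA_prod (G : Type u₁) [Group G] (H : Type u₂) [Group H]
    (hG : EmbedsInTypeA.{u₁, w₁, v₁} G) (hH : EmbedsInTypeA.{u₂, w₂, v₂} H) :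
    EmbedsInTypeA.{max u₁ u₂, w₃, v₃} (G × H) := by
  obtain ⟨E₁, _, S₁, _, hA₁, φ₁, hφ₁⟩ := hG
  obtain ⟨E₂, _, S₂, _, hA₂, φ₂, hφ₂⟩ := hH
  have hTA : IsTypeA (E₁ × E₂) (S₁ ⊕ S₂) := isTypeA_sum hA₁ hA₂
  haveI hcE₁ : Countable E₁ := hA₁.2.1.countable
  haveI hcE₂ : Countable E₂ := hA₂.2.1.countable
  haveI hcE : Countable (E₁ × E₂) := inferInstance
  haveI hcS₁ : Countable S₁ := by
    obtain ⟨R, hRfin, hRcov⟩ := exists_orbit_reps hA₁.2.2.2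
    exact countable_of_reps hRfin hRcov
  haveI hcS₂ : Countable S₂ := by
    obtain ⟨R, hRfin, hRcov⟩ := exists_orbit_reps hA₂.2.2.2
    exact countable_of_reps hRfin hRcov
  haveI hcS : Countable (S₁ ⊕ S₂) := inferInstance
  haveI : Small.{w₃} (E₁ × E₂) := Countable.toSmall _
  haveI : Small.{v₃} (S₁ ⊕ S₂) := Countable.toSmall _
  let e : Shrink.{w₃} (E₁ × E₂) ≃* (E₁ × E₂) := Shrink.mulEquiv
  let f : Shrink.{v₃} (S₁ ⊕ S₂) ≃ (S₁ ⊕ S₂) := equivShrink _ |>.symm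
  letI act : MulAction (Shrink.{w₃} (E₁ × E₂)) (Shrink.{v₃} (S₁ ⊕ S₂)) := transportAction e f
  refine ⟨Shrink.{w₃} (E₁ × E₂), inferInstance, Shrink.{v₃} (S₁ ⊕ S₂), act,
    isTypeA_transport e f hTA, e.symm.toMonoidHom.comp (φ₁.prodMap φ₂), ?_⟩
  have h1 : Function.Injective ⇑(φ₁.prodMap φ₂) := by
    rw [MonoidHom.coe_prodMap]
    exact hφ₁.prodMap hφ₂
  intro x y hxy
  apply h1
  exact e.symm.injective hxy
end

section
/- Let G be a finitely presented group and let H₁,…,Hₙ be finitely generated subgroups of G. Suppose that the intersection of all conjugates of all the Hᵢ (i.e., the intersection over all g ∈ G and all i of gHᵢg⁻¹) is trivial, and that for all 1 ≤ i, j ≤ n there are finitely many double cosets in Hᵢ\G/Hⱼ. Then G admits an action of type (A) on some set. -/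
open Pointwise

universe u v

/-- The group `G` admits an action of type (A) on some set. -/
def AdmitsTypeA.{a, b} (G : Type a) [Group G] : Prop :=
  ∃ (S : Type b) (_ : MulAction G S), IsTypeA G S

section Aux

variable {G : Type u} [Group G]

lemma Subgroup.FG.map' {G' : Type*} [Group G'] {P : Subgroup G} (h : P.FG) (f : G →* G') :
    (P.map f).FG := by
  obtain ⟨S, hS, hfin⟩ := (Subgroup.fg_iff _).1 h
  exact (Subgroup.fg_iff _).2 ⟨f '' S, by rw [← MonoidHom.map_closure, hS], hfin.image f⟩

lemma isTypeA_congr {S : Type*} {T : Type*} [MulAction G S] [MulAction G T]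
    (e : S ≃ T) (he : ∀ (g : G) (s : S), e (g • s) = g • e s) :
    IsTypeA G S → IsTypeA G T := by
  rintro ⟨hfaith, hfp, hstab, F, hFfin, hFcard, hFall⟩
  have he' : ∀ (g : G) (t : T), e.symm (g • t) = g • e.symm t := by
    intro g t
    apply e.injective
    rw [he, e.apply_symm_apply, e.apply_symm_apply]
  refine ⟨?_, hfp, ?_, (Set.image e) '' F, hFfin.image _, ?_, ?_⟩
  · intro g hg
    apply hfaith
    intro s
    apply e.injective
    rw [he, hg]
  · intro t
    have : MulAction.stabilizer G t = MulAction.stabilizer G (e.symm t) := by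
      ext g
      simp only [MulAction.mem_stabilizer_iff]
      constructor
      · intro h; rw [← he', h]
      · intro h
        have h2 := congrArg e h
        rw [he] at h2
        simpa using h2
    rw [this]
    exact hstab _
  · rintro U ⟨V, hV, rfl⟩
    rw [Set.ncard_image_of_injective _ e.injective]
    exact hFcard V hV
  · intro T' hT'
    obtain ⟨U, hU, g, hg⟩ := hFall (e.symm '' T')
      (by rw [Set.ncard_image_of_injective _ e.symm.injective]; exact hT')
    refine ⟨e '' U, ⟨U, hU, rfl⟩, g, ?_⟩
    have : e '' (g • U) = g • (e '' U) := by
      rw [← Set.image_smul, ← Set.image_smul, Set.image_image, Set.image_image]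
      simp only [he]
    rw [← this, hg]
    simp

lemma isTypeA_sigma (hfp : FinPresGroup G)
    (n : ℕ) (H : Fin n → Subgroup G) (hfg : ∀ i, (H i).FG)
    (htriv : ∀ x : G, (∀ (g : G) (i : Fin n), g⁻¹ * x * g ∈ H i) → x = 1)
    (hdc : ∀ i j, Finite (DoubleCoset.Quotient (↑(H i) : Set G) (↑(H j) : Set G))) :
    IsTypeA G (Σ i : Fin n, G ⧸ H i) := by
  classical
  set S := Σ i : Fin n, G ⧸ H i with hS
  have smul_mk : ∀ (g : G) (i : Fin n) (a : G),
      g • (⟨i, (a : G ⧸ H i)⟩ : S) = ⟨i, ((g * a : G) : G ⧸ H i)⟩ := fun g i a => rfl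
  refine ⟨?_, hfp, ?_, ?_⟩
  · -- faithful
    intro g hg
    have : g⁻¹ = 1 := by
      apply htriv
      intro a i
      have hfix := hg ⟨i, (a : G ⧸ H i)⟩
      rw [smul_mk] at hfix
      have h2 : ((g * a : G) : G ⧸ H i) = (a : G ⧸ H i) :=
        eq_of_heq (Sigma.mk.inj_iff.mp hfix).2
      rw [QuotientGroup.eq] at h2
      convert h2 using 1
      group
    simpa using congrArg (·⁻¹) this
  · -- stabilizers
    rintro ⟨i, q⟩
    obtain ⟨a, rfl⟩ := QuotientGroup.mk_surjective q
    have hstab_eq : MulAction.stabilizer G (⟨i, (a : G ⧸ H i)⟩ : S)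
        = MulAction.stabilizer G ((a : G) : G ⧸ H i) := by
      ext g
      simp only [MulAction.mem_stabilizer_iff]
      rw [smul_mk]
      constructor
      · intro h
        have h2 := eq_of_heq (Sigma.mk.inj_iff.mp h).2
        exact h2
      · intro h
        have : ((g * a : G) : G ⧸ H i) = (a : G ⧸ H i) := h
        rw [Sigma.mk.inj_iff]
        exact ⟨rfl, heq_of_eq this⟩
    rw [hstab_eq]
    have : ((a : G) : G ⧸ H i) = a • ((1 : G) : G ⧸ H i) := by
      rw [MulAction.Quotient.smul_coe, smul_eq_mul, mul_one]
    rw [this, MulAction.stabilizer_smul_eq_stabilizer_map_conj,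
      MulAction.stabilizer_quotient]
    exact (hfg i).map' _
  · -- finitely many orbits of pairs
    set pair : ∀ (i j : Fin n), G → Set S :=
      fun i j c => {⟨i, ((1 : G) : G ⧸ H i)⟩, ⟨j, (c : G ⧸ H j)⟩} with hpair
    set F₀ : Set (Set S) :=
      ⋃ (i : Fin n) (j : Fin n),
        Set.range (fun d : DoubleCoset.Quotient (↑(H i) : Set G) (↑(H j) : Set G) =>
          pair i j d.out) with hF₀
    have hF₀fin : F₀.Finite := by
      apply Set.finite_iUnion
      intro i
      apply Set.finite_iUnion
      intro j
      have := hdc i j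
      exact Set.finite_range _
    refine ⟨{U ∈ F₀ | U.ncard = 2}, hF₀fin.subset (Set.sep_subset _ _),
      fun U hU => hU.2, ?_⟩
    intro T hT
    obtain ⟨s, t, hst, rfl⟩ := Set.ncard_eq_two.mp hT
    obtain ⟨i, qa⟩ := s
    obtain ⟨j, qb⟩ := t
    obtain ⟨a, rfl⟩ := QuotientGroup.mk_surjective qa
    obtain ⟨b, rfl⟩ := QuotientGroup.mk_surjective qb
    set d := DoubleCoset.mk (H i) (H j) (a⁻¹ * b) with hd
    obtain ⟨h, hh, k, hk, hrel⟩ := (DoubleCoset.eq (H i) (H j) d.out (a⁻¹ * b)).1 (DoubleCoset.out_eq' _ _ _)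
    -- a⁻¹ * b = h * d.out * k
    set g := a * h with hg
    have h1 : g • (⟨i, ((1 : G) : G ⧸ H i)⟩ : S) = ⟨i, (a : G ⧸ H i)⟩ := by
      rw [smul_mk]
      congr 1
      rw [mul_one, QuotientGroup.eq]
      have hga : g⁻¹ * a = h⁻¹ := by rw [hg]; group
      rw [hga]
      exact (H i).inv_mem hh
    have h2 : g • (⟨j, (d.out : G ⧸ H j)⟩ : S) = ⟨j, (b : G ⧸ H j)⟩ := by
      rw [smul_mk]
      congr 1
      rw [QuotientGroup.eq]
      have hb : b = a * h * d.out * k := by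
        rw [mul_assoc, mul_assoc, ← mul_assoc h, ← hrel]
        group
      have hk2 : (g * d.out)⁻¹ * b = k := by rw [hg, hb]; group
      rw [hk2]
      exact hk
    have hsmul : g • pair i j d.out = {(⟨i, (a : G ⧸ H i)⟩ : S), ⟨j, (b : G ⧸ H j)⟩} := by
      rw [hpair]
      simp only [Set.smul_set_insert, Set.smul_set_singleton, h1, h2]
    refine ⟨pair i j d.out, ⟨?_, ?_⟩, g, hsmul⟩
    · rw [hF₀]
      exact Set.mem_iUnion.2 ⟨i, Set.mem_iUnion.2 ⟨j, Set.mem_range.2 ⟨d, rfl⟩⟩⟩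
    · have : (g • pair i j d.out).ncard = (pair i j d.out).ncard := by
        rw [← Set.image_smul]
        exact Set.ncard_image_of_injective _ (MulAction.injective g)
      rw [← this, hsmul]
      exact Set.ncard_pair hst

end Aux

/-- Let `G` be a finitely presented group and `H₁, …, Hₙ` finitely generated subgroups.
If the intersection of all conjugates of all the `Hᵢ` is trivial and each double coset
space `Hᵢ\G/Hⱼ` is finite, then `G` admits an action of type (A) on some set. -/
theorem admitsTypeA_of_double_cosets (G : Type u) [Group G] (hfp : FinPresGroup G)
    (n : ℕ) (H : Fin n → Subgroup G) (hfg : ∀ i, (H i).FG)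
    (htriv : ∀ x : G, (∀ (g : G) (i : Fin n), g⁻¹ * x * g ∈ H i) → x = 1)
    (hdc : ∀ i j, Finite (DoubleCoset.Quotient (↑(H i) : Set G) (↑(H j) : Set G))) :
    AdmitsTypeA.{u, v} G := by
  obtain ⟨m, rels, hrels, ⟨e⟩⟩ := hfp
  haveI hGsmall : Small.{v} G :=
    ⟨⟨ULift.{v} (PresentedGroup rels), ⟨(e.toEquiv.symm).trans Equiv.ulift.symm⟩⟩⟩
  haveI : Small.{v} (Fin n) := ⟨⟨ULift.{v} (Fin n), ⟨Equiv.ulift.symm⟩⟩⟩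
  haveI : ∀ i : Fin n, Small.{v} (G ⧸ H i) :=
    fun i => small_of_surjective (QuotientGroup.mk_surjective)
  haveI : Small.{v} (Σ i : Fin n, G ⧸ H i) := small_sigma _
  refine ⟨Shrink.{v} (Σ i : Fin n, G ⧸ H i), inferInstance, ?_⟩
  exact isTypeA_congr (equivShrink _) (fun g s => equivShrink_smul g s)
    (isTypeA_sigma ⟨m, rels, hrels, ⟨e⟩⟩ n H hfg htriv hdc)
end

section
/- Let G be a finitely presented group that decomposes as an internal semidirect product G = H ⋉ K (K a normal subgroup of G and H a subgroup with G = HK and H ∩ K = {1}), such that the conjugation action of H on K is faithful and has finitely many orbits. Then G admits an action of type (A) on some set. -/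
open Pointwise

universe u v

/-- Auxiliary: the image of a finitely generated subgroup is finitely generated. -/
theorem Subgroup.FG.map_aux {G : Type*} [Group G] {G' : Type*} [Group G'] {P : Subgroup G}
    (h : P.FG) (f : G →* G') : (P.map f).FG := by
  classical
  obtain ⟨S, hS⟩ := h
  exact ⟨S.image f, by rw [Finset.coe_image, ← MonoidHom.map_closure, hS]⟩

/-- Auxiliary: a type-A action can be transported along an equivalence of sets. -/
theorem isTypeA_transfer {G : Type u} [Group G] {α : Type u} {β : Type v} [MulAction G α]
    (e : α ≃ β) (hA : IsTypeA G α) : ∃ (_ : MulAction G β), IsTypeA G β := by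
  letI N : MulAction G β :=
    { smul := fun g b => e (g • e.symm b)
      one_smul := fun b => by
        show e ((1 : G) • e.symm b) = b
        rw [one_smul, e.apply_symm_apply]
      mul_smul := fun g₁ g₂ b => by
        show e ((g₁ * g₂) • e.symm b) = e (g₁ • e.symm (e (g₂ • e.symm b)))
        rw [e.symm_apply_apply, mul_smul] }
  have hsmul : ∀ (g : G) (b : β), g • b = e (g • e.symm b) := fun _ _ => rfl
  refine ⟨N, ?_, hA.2.1, ?_, ?_⟩
  · intro g hg
    refine hA.1 g fun a => ?_
    have h1 := hg (e a)
    rw [hsmul, e.symm_apply_apply] at h1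
    exact e.injective h1
  · intro b
    have hst : MulAction.stabilizer G b = MulAction.stabilizer G (e.symm b) := by
      ext g
      simp only [MulAction.mem_stabilizer_iff, hsmul]
      rw [e.apply_eq_iff_eq_symm_apply]
    rw [hst]
    exact hA.2.2.1 _
  · obtain ⟨F, hFfin, hFcard, hFcover⟩ := hA.2.2.2
    refine ⟨(Set.image e) '' F, hFfin.image _, ?_, ?_⟩
    · rintro U ⟨V, hV, rfl⟩
      rw [Set.ncard_image_of_injective _ e.injective]
      exact hFcard V hV
    · intro T hT
      have h2 : (e.symm '' T).ncard = 2 := by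
        rw [Set.ncard_image_of_injective _ e.symm.injective]; exact hT
      obtain ⟨U, hU, g, hgU⟩ := hFcover _ h2
      refine ⟨e '' U, ⟨U, hU, rfl⟩, g, ?_⟩
      have h1 : g • (e '' U) = e '' (g • U) := by
        ext b
        simp only [Set.mem_smul_set, Set.mem_image]
        constructor
        · rintro ⟨b', ⟨a, ha, rfl⟩, rfl⟩
          exact ⟨g • a, ⟨a, ha, rfl⟩, by rw [hsmul, e.symm_apply_apply]⟩
        · rintro ⟨a', ⟨a, ha, rfl⟩, rfl⟩
          exact ⟨e a, ⟨a, ha, rfl⟩, by rw [hsmul, e.symm_apply_apply]⟩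
      rw [h1, hgU]
      simpa using e.symm.symm_image_image T

/-- Let `G` be a finitely presented group that decomposes as an internal semidirect
product `G = H ⋉ K` (with `K` normal, `G = HK` and `H ∩ K = {1}`), such that the
conjugation action of `H` on `K` is faithful and has finitely many orbits. Then `G`
admits an action of type (A) on some set. -/
theorem admitsTypeA_of_semidirect (G : Type u) [Group G] (hfp : FinPresGroup G)
    (H K : Subgroup G) (hKnormal : K.Normal)
    (hprod : ∀ g : G, ∃ h ∈ H, ∃ k ∈ K, g = h * k) (hint : H ⊓ K = ⊥)
    (hfaith : ∀ h ∈ H, (∀ k ∈ K, h * k * h⁻¹ = k) → h = 1)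
    (horb : ∃ F : Set G, F.Finite ∧ (∀ f ∈ F, f ∈ K) ∧
      ∀ k ∈ K, ∃ f ∈ F, ∃ h ∈ H, k = h * f * h⁻¹) :
    AdmitsTypeA.{u, v} G := by
  classical
  obtain ⟨F, hFfin, hFK, hFcov⟩ := horb
  -- the projection `π : G → H` killing `K`
  choose π hπH κ hκK hdec using hprod
  have huniq : ∀ h₁ k₁ h₂ k₂ : G, h₁ ∈ H → k₁ ∈ K → h₂ ∈ H → k₂ ∈ K →
      h₁ * k₁ = h₂ * k₂ → h₁ = h₂ := by
    intro h₁ k₁ h₂ k₂ hh₁ hk₁ hh₂ hk₂ heq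
    have e1 : h₂⁻¹ * h₁ = k₂ * k₁⁻¹ := by
      calc h₂⁻¹ * h₁ = h₂⁻¹ * (h₁ * k₁) * k₁⁻¹ := by group
        _ = h₂⁻¹ * (h₂ * k₂) * k₁⁻¹ := by rw [heq]
        _ = k₂ * k₁⁻¹ := by group
    have e2 : h₂⁻¹ * h₁ ∈ H ⊓ K := by
      refine ⟨H.mul_mem (H.inv_mem hh₂) hh₁, ?_⟩
      rw [e1]
      exact K.mul_mem hk₂ (K.inv_mem hk₁)
    rw [hint, Subgroup.mem_bot] at e2
    have := inv_mul_eq_one.1 e2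
    exact this.symm
  have hπmul : ∀ a b : G, π (a * b) = π a * π b := by
    intro a b
    refine huniq (π (a * b)) (κ (a * b)) (π a * π b) ((π b)⁻¹ * κ a * π b * κ b)
      (hπH _) (hκK _) (H.mul_mem (hπH a) (hπH b)) ?_ ?_
    · refine K.mul_mem ?_ (hκK b)
      have h1 := hKnormal.conj_mem (κ a) (hκK a) (π b)⁻¹
      rw [inv_inv] at h1
      exact h1
    · calc π (a * b) * κ (a * b) = a * b := (hdec (a * b)).symm
        _ = (π a * κ a) * (π b * κ b) := by rw [← hdec a, ← hdec b]
        _ = π a * π b * ((π b)⁻¹ * κ a * π b * κ b) := by group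
  have hπeq : ∀ h ∈ H, π h = h := by
    intro h hh
    exact huniq (π h) (κ h) h 1 (hπH h) (hκK h) hh K.one_mem
      (by rw [← hdec h, mul_one])
  have hπk : ∀ k ∈ K, π k = 1 := by
    intro k hk
    exact huniq (π k) (κ k) 1 k (hπH k) (hκK k) H.one_mem hk
      (by rw [← hdec k, one_mul])
  have hπ1 : π 1 = 1 := hπeq 1 H.one_mem
  have hmemK : ∀ (g : G) (k : G), k ∈ K → g * k * (π g)⁻¹ ∈ K := by
    intro g k hk
    have h1 : g * k * (π g)⁻¹ = (g * k * g⁻¹) * (g * (π g)⁻¹) := by group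
    rw [h1]
    refine K.mul_mem (hKnormal.conj_mem k hk g) ?_
    have h2 : g * (π g)⁻¹ = π g * κ g * (π g)⁻¹ := by rw [← hdec g]
    rw [h2]
    exact hKnormal.conj_mem (κ g) (hκK g) (π g)
  -- the affine action of `G` on `K`
  letI M : MulAction G ↥K :=
    { smul := fun g k => ⟨g * ↑k * (π g)⁻¹, hmemK g ↑k k.2⟩
      one_smul := fun k => by
        apply Subtype.ext
        show (1 : G) * ↑k * (π 1)⁻¹ = ↑k
        rw [hπ1]; group
      mul_smul := fun a b k => by
        apply Subtype.ext
        show (a * b) * ↑k * (π (a * b))⁻¹ = a * (b * ↑k * (π b)⁻¹) * (π a)⁻¹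
        rw [hπmul]; group }
  have hco : ∀ (g : G) (k : ↥K), ((g • k : ↥K) : G) = g * ↑k * (π g)⁻¹ := fun _ _ => rfl
  -- the action is faithful
  have hfaithA : ∀ g : G, (∀ s : ↥K, g • s = s) → g = 1 := by
    intro g hgfix
    have h1 : g * 1 * (π g)⁻¹ = 1 := by
      have := congrArg Subtype.val (hgfix ⟨1, K.one_mem⟩)
      rwa [hco] at this
    have hπg : π g = g := by
      rw [mul_one] at h1
      exact (mul_inv_eq_one.1 h1).symm
    have hgH : g ∈ H := hπg ▸ hπH g
    refine hfaith g hgH fun k hk => ?_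
    have h2 : g * k * (π g)⁻¹ = k := by
      have := congrArg Subtype.val (hgfix ⟨k, hk⟩)
      rwa [hco] at this
    rwa [hπg] at h2
  -- the group is finitely generated
  have hGfg : Group.FG G := by
    obtain ⟨n, rels, _, ⟨iso⟩⟩ := hfp
    haveI h1 : Group.FG (FreeGroup (Fin n)) :=
      Group.fg_iff.2 ⟨Set.range FreeGroup.of, FreeGroup.closure_range_of _, Set.finite_range _⟩
    haveI h2 : Group.FG (PresentedGroup rels) :=
      Group.fg_of_surjective (f := PresentedGroup.mk rels) (PresentedGroup.mk_surjective rels)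
    exact Group.fg_of_surjective (f := iso.toMonoidHom) iso.surjective
  -- `H` is finitely generated (it is isomorphic to the quotient `G ⧸ K`)
  have hHfg : H.FG := by
    set φ : ↥H →* G ⧸ K := (QuotientGroup.mk' K).comp H.subtype with hφ
    have hinj : Function.Injective φ := by
      rw [injective_iff_map_eq_one]
      rintro ⟨h, hh⟩ hq
      have hhK : h ∈ K := (QuotientGroup.eq_one_iff h).1 hq
      have : h ∈ H ⊓ K := ⟨hh, hhK⟩
      rw [hint, Subgroup.mem_bot] at this
      exact Subtype.ext this
    have hsurj : Function.Surjective φ := by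
      intro q
      obtain ⟨g, rfl⟩ := QuotientGroup.mk'_surjective K q
      refine ⟨⟨π g, hπH g⟩, ?_⟩
      show ((π g : G) : G ⧸ K) = (g : G ⧸ K)
      rw [QuotientGroup.eq]
      have : (π g)⁻¹ * g = κ g := by nth_rewrite 2 [hdec g]; group
      rw [this]
      exact hκK g
    let e : ↥H ≃* G ⧸ K := MulEquiv.ofBijective φ ⟨hinj, hsurj⟩
    haveI : Group.FG (G ⧸ K) :=
      Group.fg_of_surjective (f := QuotientGroup.mk' K) (QuotientGroup.mk'_surjective K)
    haveI : Group.FG ↥H :=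
      Group.fg_of_surjective (f := e.symm.toMonoidHom) e.symm.surjective
    exact (Group.fg_iff_subgroup_fg H).1 this
  -- all stabilizers are finitely generated
  have hstab1 : MulAction.stabilizer G (⟨1, K.one_mem⟩ : ↥K) = H := by
    ext g
    simp only [MulAction.mem_stabilizer_iff]
    constructor
    · intro hgs
      have h1 : g * 1 * (π g)⁻¹ = 1 := by
        have := congrArg Subtype.val hgs
        rwa [hco] at this
      rw [mul_one] at h1
      have : g = π g := (mul_inv_eq_one.1 h1)
      rw [this]; exact hπH g
    · intro hgH
      apply Subtype.ext
      rw [hco]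
      show g * 1 * (π g)⁻¹ = 1
      rw [hπeq g hgH]; group
  have hstabfg : ∀ s : ↥K, (MulAction.stabilizer G s).FG := by
    rintro ⟨k, hk⟩
    have hks : (⟨k, hk⟩ : ↥K) = k • (⟨1, K.one_mem⟩ : ↥K) := by
      apply Subtype.ext
      rw [hco]
      show k = k * 1 * (π k)⁻¹
      rw [hπk k hk]; group
    rw [hks, MulAction.stabilizer_smul_eq_stabilizer_map_conj, hstab1]
    exact hHfg.map_aux _
  -- finitely many orbits of two-element subsets
  have horbA : ∃ F' : Set (Set ↥K), F'.Finite ∧ (∀ U ∈ F', U.ncard = 2) ∧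
      ∀ T : Set ↥K, T.ncard = 2 → ∃ U ∈ F', ∃ g : G, g • U = T := by
    refine ⟨(fun p : ↥K => ({⟨1, K.one_mem⟩, p} : Set ↥K)) ''
      {p : ↥K | (p : G) ∈ F ∧ p ≠ ⟨1, K.one_mem⟩}, ?_, ?_, ?_⟩
    · refine Set.Finite.image _ ?_
      have : {p : ↥K | (p : G) ∈ F ∧ p ≠ ⟨1, K.one_mem⟩} ⊆ (fun p : ↥K => (p : G)) ⁻¹' F :=
        fun p hp => hp.1
      exact Set.Finite.subset (hFfin.preimage (Subtype.val_injective.injOn)) this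
    · rintro U ⟨p, ⟨_, hp1⟩, rfl⟩
      exact Set.ncard_pair (Ne.symm hp1)
    · intro T hT
      obtain ⟨a, b, hab, rfl⟩ := Set.ncard_eq_two.1 hT
      have hcK : (a : G)⁻¹ * b ∈ K := K.mul_mem (K.inv_mem a.2) b.2
      obtain ⟨f, hfF, h, hh, hconj⟩ := hFcov ((a : G)⁻¹ * b) hcK
      have hfK : f ∈ K := hFK f hfF
      have hf1 : (⟨f, hfK⟩ : ↥K) ≠ ⟨1, K.one_mem⟩ := by
        intro hcontra
        apply hab
        have hfone : f = 1 := congrArg Subtype.val hcontra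
        rw [hfone] at hconj
        have : (a : G)⁻¹ * b = 1 := by rw [hconj]; group
        have hba : (a : G) = (b : G) := inv_injective (mul_eq_one_iff_eq_inv.1 this)
        exact Subtype.ext hba
      refine ⟨{⟨1, K.one_mem⟩, ⟨f, hfK⟩}, ⟨⟨f, hfK⟩, ⟨hfF, hf1⟩, rfl⟩, (a : G) * h, ?_⟩
      have hπah : π ((a : G) * h) = h := by
        rw [hπmul, hπk a a.2, hπeq h hh, one_mul]
      have hact1 : ((a : G) * h) • (⟨1, K.one_mem⟩ : ↥K) = a := by
        apply Subtype.ext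
        rw [hco, hπah]
        show (a : G) * h * 1 * h⁻¹ = a
        group
      have hact2 : ((a : G) * h) • (⟨f, hfK⟩ : ↥K) = b := by
        apply Subtype.ext
        rw [hco, hπah]
        show (a : G) * h * f * h⁻¹ = b
        have : (h : G) * f * h⁻¹ = (a : G)⁻¹ * b := hconj.symm
        calc (a : G) * h * f * h⁻¹ = (a : G) * (h * f * h⁻¹) := by group
          _ = (a : G) * ((a : G)⁻¹ * b) := by rw [this]
          _ = b := by group
      rw [Set.smul_set_insert, Set.smul_set_singleton, hact1, hact2]
  have hA : IsTypeA G ↥K := ⟨hfaithA, hfp, hstabfg, horbA⟩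
  -- transport the action to a set in the target universe
  have hGcount : Countable G := by
    obtain ⟨n, rels, _, ⟨iso⟩⟩ := hfp
    haveI h0 : Countable (FreeGroup (Fin n)) := by
      have hsurj : Function.Surjective (FreeGroup.mk : List (Fin n × Bool) → FreeGroup (Fin n)) :=
        fun x => Quot.inductionOn x fun L => ⟨L, (FreeGroup.quot_mk_eq_mk).symm⟩
      exact hsurj.countable
    haveI h1 : Countable (PresentedGroup rels) :=
      (PresentedGroup.mk_surjective rels).countable
    exact iso.surjective.countable
  haveI : Countable ↥K := Subtype.countable
  by_cases hfin : Finite ↥K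
  · obtain ⟨m, ⟨e⟩⟩ := Finite.exists_equiv_fin ↥K
    obtain ⟨N, hN⟩ := isTypeA_transfer (β := ULift.{v} (Fin m)) (e.trans Equiv.ulift.symm) hA
    exact ⟨ULift.{v} (Fin m), N, hN⟩
  · haveI : Infinite ↥K := not_finite_iff_infinite.1 hfin
    haveI : Encodable ↥K := Encodable.ofCountable _
    haveI : Denumerable ↥K := Denumerable.ofEncodableOfInfinite _
    obtain ⟨N, hN⟩ := isTypeA_transfer (β := ULift.{v} ℕ)
      ((Denumerable.eqv ↥K).trans Equiv.ulift.symm) hA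
    exact ⟨ULift.{v} ℕ, N, hN⟩
end

section
/- Every finitely presented, strongly shift-similar group G ≤ Sym(ℕ) admits an action of type (A) on some set. -/
open Pointwise

universe u v

/-- The injection `s_j : ℕ → ℕ ∖ {j}`, sending `i` to `i` for `i < j` and `i` to `i + 1`
for `i ≥ j`. -/
def sMap (j i : ℕ) : ℕ := if i < j then i else i + 1

/-- The inverse of `s_j`, defined on `ℕ ∖ {j}`: it sends `i` to `i` for `i < j` and `i` to
`i - 1` for `i > j`. -/
def sInv (j i : ℕ) : ℕ := if i < j then i else i - 1

/-- The underlying function of the permutation `ψ_j(g) = s_{g(j)}⁻¹ ∘ g|_{ℕ∖{j}} ∘ s_j`. -/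
def shiftFun (j : ℕ) (g : Equiv.Perm ℕ) (i : ℕ) : ℕ := sInv (g j) (g (sMap j i))

/-- A subgroup `G ≤ Sym(ℕ)` is shift-similar if `ψ_j(g) ∈ G` for all `g ∈ G` and `j ∈ ℕ`,
and strongly shift-similar if moreover each `ψ_j` restricted to `G` is surjective onto
`G`. -/
def StronglyShiftSimilar (G : Subgroup (Equiv.Perm ℕ)) : Prop :=
  (∀ g ∈ G, ∀ j : ℕ, ∃ g' ∈ G, ∀ i : ℕ, g' i = shiftFun j g i) ∧
  (∀ j : ℕ, ∀ h ∈ G, ∃ g ∈ G, ∀ i : ℕ, h i = shiftFun j g i)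

namespace SSAux

lemma Equiv.Perm.inv_apply_self (g : _root_.Equiv.Perm ℕ) (x : ℕ) : g⁻¹ (g x) = x :=
  _root_.Equiv.Perm.inv_eq_iff_eq.mpr rfl

lemma Equiv.Perm.apply_inv_self (g : _root_.Equiv.Perm ℕ) (x : ℕ) : g (g⁻¹ x) = x :=
  (_root_.Equiv.eq_symm_apply g).mp rfl

lemma sMap_ne (j i : ℕ) : sMap j i ≠ j := by unfold sMap; split_ifs <;> omega

lemma sInv_sMap (j i : ℕ) : sInv j (sMap j i) = i := by unfold sMap sInv; split_ifs <;> omega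

lemma sMap_sInv {j x : ℕ} (h : x ≠ j) : sMap j (sInv j x) = x := by
  unfold sMap sInv; split_ifs <;> omega

def ePerm (j m : ℕ) (h : Equiv.Perm ℕ) : Equiv.Perm ℕ where
  toFun x := if x = j then m else sMap m (h (sInv j x))
  invFun y := if y = m then j else sMap j (h⁻¹ (sInv m y))
  left_inv x := by
    by_cases hx : x = j
    · simp [hx]
    · dsimp only
      rw [if_neg hx, if_neg (sMap_ne _ _), sInv_sMap, Equiv.Perm.inv_apply_self, sMap_sInv hx]
  right_inv y := by
    by_cases hy : y = m
    · simp [hy]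
    · dsimp only
      rw [if_neg hy, if_neg (sMap_ne _ _), sInv_sMap, Equiv.Perm.apply_inv_self, sMap_sInv hy]

lemma ePerm_apply (j m : ℕ) (h : Equiv.Perm ℕ) (x : ℕ) :
    ePerm j m h x = if x = j then m else sMap m (h (sInv j x)) := rfl

lemma ePerm_inv (j m : ℕ) (h : Equiv.Perm ℕ) : (ePerm j m h)⁻¹ = ePerm m j h⁻¹ :=
  Equiv.ext fun _ => rfl

lemma ePerm_apply_self (j m : ℕ) (h : Equiv.Perm ℕ) : ePerm j m h j = m := by
  simp [ePerm_apply]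

lemma ePerm_apply_sMap (j m : ℕ) (h : Equiv.Perm ℕ) (i : ℕ) :
    ePerm j m h (sMap j i) = sMap m (h i) := by
  rw [ePerm_apply, if_neg (sMap_ne _ _), sInv_sMap]

lemma eq_ePerm_of_shiftFun {g h : Equiv.Perm ℕ} {j : ℕ} (H : ∀ i, h i = shiftFun j g i) :
    g = ePerm j (g j) h := by
  apply Equiv.ext
  intro x
  by_cases hx : x = j
  · simp [hx, ePerm_apply_self]
  · have hx' : g x ≠ g j := fun hc => hx (g.injective hc)
    rw [ePerm_apply, if_neg hx, H, shiftFun, sMap_sInv hx, sMap_sInv hx']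

lemma shiftFun_ePerm (j m : ℕ) (h : Equiv.Perm ℕ) (i : ℕ) :
    shiftFun j (ePerm j m h) i = h i := by
  rw [shiftFun, ePerm_apply_self, ePerm_apply_sMap, sInv_sMap]

lemma ePerm_mul_inv (j m m' : ℕ) (h : Equiv.Perm ℕ) :
    ePerm j m h * (ePerm j m' h)⁻¹ = ePerm m' m 1 := by
  rw [ePerm_inv]
  apply Equiv.ext
  intro x
  rw [Equiv.Perm.mul_apply]
  by_cases hx : x = m'
  · simp [hx, ePerm_apply_self]
  · rw [ePerm_apply m' j h⁻¹, if_neg hx, ePerm_apply, if_neg (sMap_ne _ _), sInv_sMap,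
      Equiv.Perm.apply_inv_self, ePerm_apply, if_neg hx, Equiv.Perm.one_apply]

lemma ePerm_decomp (j m : ℕ) (h : Equiv.Perm ℕ) :
    ePerm j m h = ePerm j m 1 * ePerm j j h := by
  apply Equiv.ext
  intro x
  rw [Equiv.Perm.mul_apply]
  by_cases hx : x = j
  · simp [hx, ePerm_apply_self]
  · rw [ePerm_apply j j h, if_neg hx, ePerm_apply j m 1, if_neg (sMap_ne _ _), sInv_sMap,
      Equiv.Perm.one_apply, ePerm_apply, if_neg hx]

lemma ePerm_jj_one (j : ℕ) : ePerm j j (1 : Equiv.Perm ℕ) = 1 := by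
  apply Equiv.ext
  intro x
  by_cases hx : x = j
  · simp [hx, ePerm_apply_self]
  · rw [ePerm_apply, if_neg hx, Equiv.Perm.one_apply, sMap_sInv hx, Equiv.Perm.one_apply]

lemma ePerm_jj_mul (j : ℕ) (h₁ h₂ : Equiv.Perm ℕ) :
    ePerm j j (h₁ * h₂) = ePerm j j h₁ * ePerm j j h₂ := by
  apply Equiv.ext
  intro x
  rw [Equiv.Perm.mul_apply]
  by_cases hx : x = j
  · simp [hx, ePerm_apply_self]
  · rw [ePerm_apply j j h₂, if_neg hx, ePerm_apply j j (h₁ * h₂), if_neg hx,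
      ePerm_apply j j h₁, if_neg (sMap_ne _ _), sInv_sMap, Equiv.Perm.mul_apply]

lemma ePerm_jj_inj {j : ℕ} {h h' : Equiv.Perm ℕ} (H : ePerm j j h = ePerm j j h') : h = h' := by
  apply Equiv.ext
  intro i
  have := congrArg (fun p : Equiv.Perm ℕ => p (sMap j i)) H
  simp only [ePerm_apply_sMap] at this
  simp only [sMap] at this
  split at this <;> split at this <;> omega


variable {G : Subgroup (Equiv.Perm ℕ)}

lemma down (hss : StronglyShiftSimilar G) {g : Equiv.Perm ℕ} (hg : g ∈ G) (j : ℕ) :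
    ∃ h, h ∈ G ∧ g = ePerm j (g j) h := by
  obtain ⟨g', hg', hfun⟩ := hss.1 g hg j
  exact ⟨g', hg', eq_ePerm_of_shiftFun hfun⟩

lemma up (hss : StronglyShiftSimilar G) {h : Equiv.Perm ℕ} (hh : h ∈ G) (j : ℕ) :
    ∃ m, ePerm j m h ∈ G := by
  obtain ⟨g, hgG, hfun⟩ := hss.2 j h hh
  exact ⟨g j, by rw [← eq_ePerm_of_shiftFun hfun]; exact hgG⟩

lemma strictMono_perm_eq_one {h : Equiv.Perm ℕ} (hm : ∀ i j, i < j → h i < h j) : h = 1 := by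
  have key : ∀ i, h i = i := by
    intro i
    induction i using Nat.strong_induction_on with
    | _ i IH =>
      obtain ⟨k, hk⟩ := h.surjective i
      rcases lt_trichotomy k i with hl | he | hg
      · have := IH k hl; omega
      · exact he ▸ hk
      · -- h i < h k = i
        have h1 : h i < i := hk ▸ hm i k hg
        have h2 : h (h i) = h i := IH (h i) h1
        have := h.injective h2
        omega
  exact Equiv.ext key

lemma exists_finitary (hss : StronglyShiftSimilar G) {h : Equiv.Perm ℕ} (hh : h ∈ G)
    (hne : h ≠ 1) : ∃ F, F ∈ G ∧ F ≠ 1 ∧ ∃ N, ∀ x, N ≤ x → F x = x := by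
  choose m hm using fun j => up hss hh j
  by_cases hE : ∀ j, ePerm j (m j) h = ePerm (j + 1) (m (j + 1)) h
  · exfalso
    -- all equal to the one at 0
    have hall : ∀ j, ePerm j (m j) h = ePerm 0 (m 0) h := by
      intro j
      induction j with
      | zero => rfl
      | succ n IH => rw [← hE n]; exact IH
    set g := ePerm 0 (m 0) h with hg
    have hkey : ∀ j i, g (sMap j i) = sMap (g j) (h i) := by
      intro j i
      have h1 : g = ePerm j (m j) h := (hall j).symm
      have h2 : g j = m j := by rw [h1]; exact ePerm_apply_self _ _ _
      have h3 : g (sMap j i) = sMap (m j) (h i) := by rw [h1]; exact ePerm_apply_sMap _ _ _ _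
      rw [h3, h2]
    -- g i ∈ {h i, h i + 1} for j > i, and equality decided by comparison
    have hge : ∀ i, g i = h i := by
      intro i
      -- choose j > i with g j > h i
      set T := Finset.image (⇑g⁻¹) (Finset.range (h i + 1)) with hT
      set j := i + (T.sup id) + 1 with hj
      have hji : i < j := by omega
      have hgj : h i < g j := by
        by_contra hc
        push_neg at hc
        have : g j ∈ Finset.range (h i + 1) := Finset.mem_range.mpr (by omega)
        have hmem : j ∈ T := by
          rw [hT]
          refine Finset.mem_image.mpr ⟨g j, this, ?_⟩
          exact Equiv.Perm.inv_apply_self g j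
        have := Finset.le_sup (f := id) hmem
        simp only [id] at this
        omega
      have := hkey j i
      rw [show sMap j i = i from by unfold sMap; split_ifs <;> omega] at this
      rw [this]
      unfold sMap; split_ifs <;> omega
    have hmono : ∀ i j, i < j → h i < h j := by
      intro i j hij
      have := hkey j i
      rw [show sMap j i = i from by unfold sMap; split_ifs <;> omega, hge i, hge j] at this
      unfold sMap at this; split_ifs at this <;> omega
    exact hne (strictMono_perm_eq_one hmono)
  · push_neg at hE
    obtain ⟨j, hne'⟩ := hE
    refine ⟨ePerm (j + 1) (m (j + 1)) h * (ePerm j (m j) h)⁻¹,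
      mul_mem (hm (j + 1)) (inv_mem (hm j)), ?_, ?_⟩
    · rw [ne_eq, mul_inv_eq_one]; exact fun hc => hne' hc.symm
    · refine ⟨m j + m (j + 1) + h j + 2, ?_⟩
      intro x hx
      rw [Equiv.Perm.mul_apply, ePerm_inv]
      have hxm : x ≠ m j := by omega
      rw [ePerm_apply (m j) j h⁻¹, if_neg hxm]
      have hy : sInv (m j) x = x - 1 := by unfold sInv; split_ifs <;> omega
      rw [hy]
      have hyj : h⁻¹ (x - 1) ≠ j := by
        intro hc
        have : x - 1 = h j := by
          have := congrArg h hc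
          rwa [Equiv.Perm.apply_inv_self] at this
        omega
      have ht : sMap j (h⁻¹ (x - 1)) ≠ j + 1 := by
        unfold sMap; split_ifs <;> omega
      rw [ePerm_apply (j+1) (m (j+1)) h, if_neg ht]
      have hs : sInv (j + 1) (sMap j (h⁻¹ (x - 1))) = h⁻¹ (x - 1) := by
        have := hyj; unfold sMap sInv; split_ifs <;> omega
      rw [hs, Equiv.Perm.apply_inv_self]
      unfold sMap; split_ifs <;> omega


lemma swap01_mem (hss : StronglyShiftSimilar G) :
    ∀ N F, F ∈ G → F ≠ 1 → (∀ x, N ≤ x → F x = x) → Equiv.swap 0 1 ∈ G := by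
  intro N
  induction N using Nat.strong_induction_on with
  | _ N IH =>
    intro F hF hne hbnd
    have hsmall : ∀ x, N ≤ F x → F x = x := by
      intro x hx
      have h1 : F (F x) = F x := hbnd (F x) hx
      exact F.injective h1
    by_cases hN : N ≤ 2
    · -- F must be the transposition (0 1)
      have hb2 : ∀ x, 2 ≤ x → F x = x := fun x hx => hbnd x (by omega)
      have hlt : ∀ x, x < 2 → F x < 2 := by
        intro x hx
        by_contra hc
        push_neg at hc
        have h1 : F (F x) = F x := hb2 (F x) hc
        have h2 : F x = x := F.injective h1
        omega
      have h0 := hlt 0 (by omega)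
      have h1 := hlt 1 (by omega)
      have hne01 : F 0 ≠ F 1 := fun hc => by have := F.injective hc; omega
      by_cases hid : F 0 = 0
      · exfalso
        apply hne
        apply Equiv.ext
        intro x
        rcases Nat.lt_or_ge x 2 with hx | hx
        · interval_cases x
          · simpa using hid
          · simp only [Equiv.Perm.one_apply]; omega
        · simpa using hb2 x hx
      · have hF0 : F 0 = 1 := by omega
        have hF1 : F 1 = 0 := by omega
        have : F = Equiv.swap 0 1 := by
          apply Equiv.ext
          intro x
          rw [Equiv.swap_apply_def]
          rcases Nat.lt_or_ge x 2 with hx | hx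
          · interval_cases x
            · simpa using hF0
            · simpa using hF1
          · have := hb2 x hx
            split_ifs <;> omega
        exact this ▸ hF
    · push_neg at hN
      set P := N - 1 with hP
      have hP2 : 2 ≤ P := by omega
      by_cases hTop : F P = P
      · exact IH (N - 1) (by omega) F hF hne (by
          intro x hx
          rcases Nat.lt_or_ge x N with h | h
          · have : x = P := by omega
            rw [this]; exact hTop
          · exact hbnd x h)
      · have hF0le : F 0 ≤ P := by
          by_contra hc
          push_neg at hc
          have := hsmall 0 (by omega)
          omega
        by_cases hC : F = ePerm 0 (F 0) 1
        · -- F is the descending cycle; F 0 = P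
          have hF0 : F 0 = P := by
            by_contra hc
            have hlt' : F 0 < P := by omega
            apply hTop
            conv_lhs => rw [hC]
            rw [ePerm_apply, if_neg (by omega), Equiv.Perm.one_apply]
            unfold sMap sInv; split_ifs <;> omega
          have hFP : F P = P - 1 := by
            conv_lhs => rw [hC]
            rw [ePerm_apply, if_neg (by omega), Equiv.Perm.one_apply, hF0]
            unfold sMap sInv; split_ifs <;> omega
          obtain ⟨h', hh'G, hEq⟩ := down hss hF P
          rw [hFP] at hEq
          have hne' : h' ≠ 1 := by
            intro hc
            rw [hc] at hEq
            have : F 0 = 0 := by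
              rw [hEq, ePerm_apply, if_neg (by omega), Equiv.Perm.one_apply]
              unfold sMap sInv; split_ifs <;> omega
            omega
          refine IH (N - 1) (by omega) h' hh'G hne' ?_
          intro i hi
          have h1 : F (sMap P i) = sMap (P - 1) (h' i) := by
            conv_lhs => rw [hEq]; rfl
            exact ePerm_apply_sMap _ _ _ _
          have h2 : sMap P i = i + 1 := by unfold sMap; split_ifs <;> omega
          have h3 : F (i + 1) = i + 1 := hbnd (i + 1) (by omega)
          rw [h2, h3] at h1
          unfold sMap at h1; split_ifs at h1 <;> omega
        · obtain ⟨h', hh'G, hEq⟩ := down hss hF 0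
          have hne' : h' ≠ 1 := by
            intro hc
            rw [hc] at hEq
            exact hC hEq
          refine IH (N - 1) (by omega) h' hh'G hne' ?_
          intro i hi
          have h1 : F (sMap 0 i) = sMap (F 0) (h' i) := by
            conv_lhs => rw [hEq]; rfl
            exact ePerm_apply_sMap _ _ _ _
          have h2 : sMap 0 i = i + 1 := by unfold sMap; split_ifs <;> omega
          have h3 : F (i + 1) = i + 1 := hbnd (i + 1) (by omega)
          rw [h2, h3] at h1
          unfold sMap at h1; split_ifs at h1 <;> omega


lemma id_step (m : ℕ) : ePerm 0 (m + 1) 1 = Equiv.swap m (m + 1) * ePerm 0 m 1 := by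
  apply Equiv.ext
  intro x
  simp only [Equiv.Perm.mul_apply, ePerm_apply, Equiv.swap_apply_def, Equiv.Perm.one_apply]
  unfold sMap sInv
  split_ifs <;> first | omega | simp_all

lemma shiftE (a b : ℕ) : ePerm 0 0 (Equiv.swap a b) = Equiv.swap (a + 1) (b + 1) := by
  apply Equiv.ext
  intro x
  simp only [Equiv.Perm.mul_apply, ePerm_apply, Equiv.swap_apply_def]
  unfold sMap sInv
  split_ifs <;> first | omega | simp_all

lemma cyc_apply (m x : ℕ) : ePerm 0 m 1 x = if x = 0 then m else if x ≤ m then x - 1 else x := by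
  rw [ePerm_apply]
  simp only [Equiv.Perm.one_apply]
  unfold sMap sInv
  split_ifs <;> first | omega | simp_all

lemma cycinv_apply (m x : ℕ) :
    (ePerm 0 m 1)⁻¹ x = if x = m then 0 else if x < m then x + 1 else x := by
  rw [ePerm_inv, inv_one, ePerm_apply]
  simp only [Equiv.Perm.one_apply]
  unfold sMap sInv
  split_ifs <;> first | omega | simp_all

lemma eKK_apply (K : ℕ) (h : Equiv.Perm ℕ) (x : ℕ) :
    ePerm K K h x = if x = K then K else sMap K (h (sInv K x)) := ePerm_apply _ _ _ _

lemma id3 (c : ℕ) :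
    ePerm 0 (c + 2) 1 * Equiv.swap (c + 1) (c + 2) * (ePerm 0 (c + 1) 1)⁻¹ =
      Equiv.swap c (c + 1) * Equiv.swap (c + 1) (c + 2) := by
  apply Equiv.ext
  intro x
  simp only [Equiv.Perm.mul_apply, cyc_apply, cycinv_apply, Equiv.swap_apply_def]
  split_ifs <;> first | omega | simp_all

lemma id4' {K m : ℕ} (h : K + 1 ≤ m) : (ePerm 0 m 1 * Equiv.swap K (K + 1)) K = K := by
  simp only [Equiv.Perm.mul_apply, cyc_apply, Equiv.swap_apply_def]
  split_ifs <;> first | omega | simp_all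

lemma id5 {K m : ℕ} (hK : 1 ≤ K) (hm : K + 2 ≤ m) :
    ePerm 0 m 1 * Equiv.swap K (K + 1) = ePerm K K (ePerm 0 (m - 1) 1) := by
  apply Equiv.ext
  intro x
  simp only [Equiv.Perm.mul_apply, eKK_apply, cyc_apply, Equiv.swap_apply_def]
  unfold sMap sInv
  split_ifs <;> first | omega | simp_all

lemma id6 {K m : ℕ} (hK : 1 ≤ K) (hm : K + 2 ≤ m) :
    ePerm 0 m 1 * Equiv.swap K (K + 1) * (ePerm 0 (m - 1) 1)⁻¹ =
      Equiv.swap (K - 1) K * Equiv.swap (m - 1) m := by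
  apply Equiv.ext
  intro x
  simp only [Equiv.Perm.mul_apply, cyc_apply, cycinv_apply, Equiv.swap_apply_def]
  split_ifs <;> first | omega | simp_all

lemma id7 {m : ℕ} (hm : 1 ≤ m) : ePerm 0 m 1 = Equiv.swap (m - 1) m * ePerm 0 (m - 1) 1 := by
  have := id_step (m - 1)
  rw [show m - 1 + 1 = m by omega] at this
  exact this

lemma swap_succ_mem (hss : StronglyShiftSimilar G) (h01 : Equiv.swap 0 1 ∈ G) :
    ∀ K : ℕ, Equiv.swap K (K + 1) ∈ G := by
  intro K
  induction K using Nat.strong_induction_on with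
  | _ K IH =>
    rcases Nat.eq_zero_or_pos K with h0 | hK1
    · subst h0; exact h01
    · have cyc_mem : ∀ m, m ≤ K → ePerm 0 m 1 ∈ G := by
        intro m
        induction m with
        | zero => intro _; rw [show (0 : ℕ) = (0 : ℕ) from rfl, ePerm_jj_one]; exact one_mem G
        | succ n IHn =>
          intro hn
          rw [id_step]
          exact mul_mem (IH n (by omega)) (IHn (by omega))
      have hswK : Equiv.swap (K - 1) K ∈ G := by
        have := IH (K - 1) (by omega)
        rwa [show K - 1 + 1 = K by omega] at this
      obtain ⟨m, hgm⟩ := up hss hswK 0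
      have hgid : ePerm 0 m (Equiv.swap (K - 1) K) = ePerm 0 m 1 * Equiv.swap K (K + 1) := by
        rw [ePerm_decomp, shiftE, show K - 1 + 1 = K by omega]
      rw [hgid] at hgm
      rcases le_or_gt m K with hmK | hmK
      · have h2 := mul_mem (inv_mem (cyc_mem m hmK)) hgm
        rwa [inv_mul_cancel_left] at h2
      · rcases eq_or_lt_of_le (show K + 1 ≤ m from hmK) with hmeq | hmgt
        · -- m = K + 1 : three-cycle trick
          subst hmeq
          have hσ := mul_mem hgm (inv_mem (cyc_mem K le_rfl))
          have hid3 := id3 (K - 1)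
          rw [show K - 1 + 1 = K by omega, show K - 1 + 2 = K + 1 by omega] at hid3
          rw [hid3] at hσ
          have h2 := mul_mem (inv_mem hswK) hσ
          rwa [inv_mul_cancel_left] at h2
        · -- m ≥ K + 2
          have hm2 : K + 2 ≤ m := hmgt
          obtain ⟨h₂, hh₂G, hEq2⟩ := down hss hgm K
          rw [id4' (by omega)] at hEq2
          have h₂eq : h₂ = ePerm 0 (m - 1) 1 :=
            ePerm_jj_inj (j := K) (by rw [← hEq2, id5 hK1 hm2])
          rw [h₂eq] at hh₂G
          have hq := mul_mem hgm (inv_mem hh₂G)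
          rw [id6 hK1 hm2] at hq
          have hsw : Equiv.swap (m - 1) m ∈ G := by
            have h2 := mul_mem (inv_mem hswK) hq
            rwa [inv_mul_cancel_left] at h2
          have hcm : ePerm 0 m 1 ∈ G := by
            rw [id7 (by omega)]
            exact mul_mem hsw hh₂G
          have h2 := mul_mem (inv_mem hcm) hgm
          rwa [inv_mul_cancel_left] at h2

lemma cyc0_mem (hss : StronglyShiftSimilar G) (h01 : Equiv.swap 0 1 ∈ G) (m : ℕ) :
    ePerm 0 m 1 ∈ G := by
  induction m with
  | zero => rw [ePerm_jj_one]; exact one_mem G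
  | succ n IHn => rw [id_step]; exact mul_mem (swap_succ_mem hss h01 n) IHn

lemma ePerm_one_mem (hss : StronglyShiftSimilar G) (h01 : Equiv.swap 0 1 ∈ G) (j m : ℕ) :
    ePerm j m 1 ∈ G := by
  have := ePerm_mul_inv 0 m j 1
  rw [← this]
  exact mul_mem (cyc0_mem hss h01 m) (inv_mem (cyc0_mem hss h01 j))

lemma swap01_of_exists (hss : StronglyShiftSimilar G) {h : Equiv.Perm ℕ} (hh : h ∈ G)
    (hne : h ≠ 1) : Equiv.swap 0 1 ∈ G := by
  obtain ⟨F, hFG, hFne, N, hbnd⟩ := exists_finitary hss hh hne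
  exact swap01_mem hss N F hFG hFne hbnd

lemma eJJ_mem (hss : StronglyShiftSimilar G) (h01 : Equiv.swap 0 1 ∈ G) {h : Equiv.Perm ℕ}
    (hh : h ∈ G) (j : ℕ) : ePerm j j h ∈ G := by
  obtain ⟨m, hm⟩ := up hss hh j
  have hdec := ePerm_decomp j m h
  have : ePerm j j h = (ePerm j m 1)⁻¹ * ePerm j m h := by
    rw [hdec, inv_mul_cancel_left]
  rw [this]
  exact mul_mem (inv_mem (ePerm_one_mem hss h01 j m)) hm

lemma exists_move (hss : StronglyShiftSimilar G) (h01 : Equiv.swap 0 1 ∈ G) {a b : ℕ}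
    (hab : a ≠ b) : ∃ w ∈ G, w 0 = a ∧ w 1 = b := by
  set c := (ePerm 0 a 1)⁻¹ b with hc
  have hc0 : c ≠ 0 := by
    intro h0
    apply hab
    have : ePerm 0 a 1 c = b := by rw [hc]; exact Equiv.Perm.apply_inv_self _ _
    rw [h0, ePerm_apply_self] at this
    exact this
  refine ⟨ePerm 0 a 1 * ePerm 1 c 1, mul_mem (ePerm_one_mem hss h01 0 a)
    (ePerm_one_mem hss h01 1 c), ?_, ?_⟩
  · have h1 : ePerm 1 c 1 0 = 0 := by
      rw [ePerm_apply, if_neg (by omega), Equiv.Perm.one_apply]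
      unfold sMap sInv; split_ifs <;> omega
    rw [Equiv.Perm.mul_apply, h1, ePerm_apply_self]
  · have h1 : ePerm 1 c 1 1 = c := ePerm_apply_self _ _ _
    rw [Equiv.Perm.mul_apply, h1, hc]
    exact Equiv.Perm.apply_inv_self _ _
end SSAux

/-- Every finitely presented, strongly shift-similar group `G ≤ Sym(ℕ)` admits an action
of type (A) on some set. -/
theorem admitsTypeA_of_stronglyShiftSimilar (G : Subgroup (Equiv.Perm ℕ))
    (hfp : FinPresGroup G) (hss : StronglyShiftSimilar G) :
    AdmitsTypeA.{0, v} G := by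
  classical
  by_cases htriv : ∀ g : G, g = 1
  · -- trivial group: act trivially on a point
    letI instS : SMul G PUnit.{v+1} := ⟨fun _ x => x⟩
    letI inst : MulAction G PUnit.{v+1} :=
      { one_smul := fun _ => rfl, mul_smul := fun _ _ _ => rfl }
    refine ⟨PUnit.{v+1}, inst, fun g _ => htriv g, hfp, ?_, ∅, Set.finite_empty, by simp, ?_⟩
    · intro s
      refine ⟨∅, ?_⟩
      rw [Finset.coe_empty, Subgroup.closure_empty]
      ext g
      constructor
      · intro _
        exact MulAction.mem_stabilizer_iff.mpr rfl
      · intro _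
        exact Subgroup.mem_bot.mpr (htriv g)
    · intro T hT
      obtain ⟨a, b, hab, -⟩ := Set.ncard_eq_two.mp hT
      exact absurd (Subsingleton.elim a b) hab
  · push_neg at htriv
    obtain ⟨g₀, hg₀⟩ := htriv
    have hne : (g₀ : Equiv.Perm ℕ) ≠ 1 := fun hc => hg₀ (Subtype.ext hc)
    have h01 : Equiv.swap 0 1 ∈ G := SSAux.swap01_of_exists hss g₀.2 hne
    letI instS : SMul G (ULift.{v} ℕ) := ⟨fun g x => ⟨(g : Equiv.Perm ℕ) x.down⟩⟩
    letI inst : MulAction G (ULift.{v} ℕ) :=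
      { one_smul := fun x => rfl, mul_smul := fun g h x => rfl }
    haveI fgG : Group.FG G := by
      obtain ⟨n, rels, hfin, ⟨e⟩⟩ := hfp
      haveI h1 : Group.FG (FreeGroup (Fin n)) :=
        Group.fg_iff.mpr ⟨Set.range FreeGroup.of, FreeGroup.closure_range_of _,
          Set.finite_range _⟩
      haveI h2 : Group.FG (PresentedGroup rels) :=
        Group.fg_of_surjective (f := PresentedGroup.mk rels) (PresentedGroup.mk_surjective rels)
      exact Group.fg_of_surjective (f := e.toMonoidHom) e.surjective
    refine ⟨ULift.{v} ℕ, inst, ?_, hfp, ?_, ?_⟩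
    · -- faithful
      intro g hg
      have : ∀ x : ℕ, (g : Equiv.Perm ℕ) x = x := fun x => congrArg ULift.down (hg ⟨x⟩)
      exact Subtype.ext (Equiv.ext this)
    · -- stabilizers are finitely generated
      intro s
      set j := s.down with hj
      have hstabmem : ∀ g : G, g ∈ MulAction.stabilizer G s ↔ (g : Equiv.Perm ℕ) j = j := by
        intro g
        rw [MulAction.mem_stabilizer_iff]
        constructor
        · intro h
          exact congrArg ULift.down h
        · intro h
          show ULift.up ((g : Equiv.Perm ℕ) s.down) = s
          rw [show (g : Equiv.Perm ℕ) s.down = s.down from h]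
      let φ : G →* ↥(MulAction.stabilizer G s) :=
        { toFun := fun h => ⟨⟨SSAux.ePerm j j h.1, SSAux.eJJ_mem hss h01 h.2 j⟩,
            (hstabmem _).mpr (SSAux.ePerm_apply_self j j _)⟩
          map_one' := Subtype.ext (Subtype.ext (by
            show SSAux.ePerm j j ((1 : G) : Equiv.Perm ℕ) = 1
            rw [OneMemClass.coe_one, SSAux.ePerm_jj_one]))
          map_mul' := fun a b => Subtype.ext (Subtype.ext (by
            show SSAux.ePerm j j ((a * b : G) : Equiv.Perm ℕ) = _
            rw [Subgroup.coe_mul, SSAux.ePerm_jj_mul]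
            rfl)) }
      have hsurj : Function.Surjective φ := by
        rintro ⟨⟨g, hgG⟩, hstab⟩
        have hgj : g j = j := (hstabmem ⟨g, hgG⟩).mp hstab
        obtain ⟨h, hhG, heq⟩ := SSAux.down hss hgG j
        rw [hgj] at heq
        exact ⟨⟨h, hhG⟩, Subtype.ext (Subtype.ext heq.symm)⟩
      haveI := Group.fg_of_surjective (f := φ) hsurj
      exact (Group.fg_iff_subgroup_fg _).mp this
    · -- finitely many orbits of pairs
      refine ⟨{({ULift.up 0, ULift.up 1} : Set (ULift.{v} ℕ))}, Set.finite_singleton _, ?_, ?_⟩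
      · intro U hU
        rw [Set.mem_singleton_iff] at hU
        subst hU
        exact Set.ncard_pair (by intro hc; exact absurd (congrArg ULift.down hc) (by norm_num))
      · intro T hT
        obtain ⟨a, b, hab, rfl⟩ := Set.ncard_eq_two.mp hT
        have hab' : a.down ≠ b.down := fun hc => hab (by cases a; cases b; cases hc; rfl)
        obtain ⟨w, hwG, hw0, hw1⟩ := SSAux.exists_move hss h01 hab'
        refine ⟨{ULift.up 0, ULift.up 1}, Set.mem_singleton _, ⟨w, hwG⟩, ?_⟩
        rw [Set.smul_set_insert, Set.smul_set_singleton]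
        have e0 : (⟨w, hwG⟩ : G) • (ULift.up 0 : ULift.{v} ℕ) = a := by
          show ULift.up (w 0) = a
          rw [hw0]
        have e1 : (⟨w, hwG⟩ : G) • (ULift.up 1 : ULift.{v} ℕ) = b := by
          show ULift.up (w 1) = b
          rw [hw1]
        rw [e0, e1]
end
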